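/- Fix d ≥ 2 and δ ∈ (0,1). Let {v_1, …, v_n} be a δ-net of S^{d-1}, for each j let P_j = {x ∈ ℝ^d : ‖x‖ ≤ 1, x·v_j > 1 − δ²/8}, let V = Vol(P_1) be their common volume, let K_0 = B_d \ ∪_{j=1}^n P_j, and for x ∈ {0,1}^n let K_x = K_0 ∪ ∪_{j : x_j = 1} P_j. Then for all x, y ∈ {0,1}^n: Vol(K_x) = Vol(K_0) + |x|·V, where |x| denotes the Hamming weight of x, and Vol(K_x Δ K_y) = |x ⊕ y|·V, where |x ⊕ y| denotes the Hamming distance between x and y. -/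
import Mathlib


open Metric Set MeasureTheory
open scoped RealInnerProductSpace symmDiff ENNReal

noncomputable section

/-- `N` is a `δ`-net of `S`. -/
def IsNet {d : ℕ} (δ : ℝ) (N S : Set (EuclideanSpace ℝ (Fin d))) : Prop :=
  N ⊆ S ∧ (∀ v ∈ N, ∀ w ∈ N, v ≠ w → δ ≤ dist v w) ∧ ∀ v ∈ S, ∃ w ∈ N, dist v w ≤ δ

/-- The spherical cap of radius `δ/2` around `v`: `{x : ‖x‖ ≤ 1, ⟪x, v⟫ > 1 - δ²/8}`. -/
def cap {d : ℕ} (δ : ℝ) (v : EuclideanSpace ℝ (Fin d)) : Set (EuclideanSpace ℝ (Fin d)) :=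
  {x | ‖x‖ ≤ 1 ∧ 1 - δ ^ 2 / 8 < ⟪x, v⟫}

/-- The unit ball with all the caps removed. -/
def capBase {d n : ℕ} (δ : ℝ) (v : Fin n → EuclideanSpace ℝ (Fin d)) :
    Set (EuclideanSpace ℝ (Fin d)) :=
  closedBall 0 1 \ ⋃ j, cap δ (v j)

/-- The convex body `K_x` associated to a bitstring `x`. -/
def capBody {d n : ℕ} (δ : ℝ) (v : Fin n → EuclideanSpace ℝ (Fin d)) (x : Fin n → Bool) :
    Set (EuclideanSpace ℝ (Fin d)) :=
  capBase δ v ∪ ⋃ j ∈ {j | x j = true}, cap δ (v j)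

/-- For a `δ`-net `{v_1, …, v_n}` of `S^{d-1}` with caps of common volume `V`:
`Vol(K_x) = Vol(K_0) + |x|·V` and `Vol(K_x Δ K_y) = |x ⊕ y|·V`. -/
theorem volume_capBody (d : ℕ) (hd : 2 ≤ d) (δ : ℝ) (hδ0 : 0 < δ) (hδ1 : δ < 1)
    (n : ℕ) (v : Fin n → EuclideanSpace ℝ (Fin d)) (hinj : Function.Injective v)
    (hnet : IsNet δ (Set.range v) (sphere (0 : EuclideanSpace ℝ (Fin d)) 1))
    (V : ℝ≥0∞) (hV : ∀ j, volume (cap δ (v j)) = V)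
    (x y : Fin n → Bool) :
    volume (capBody δ v x) =
      volume (capBase δ v) + (Finset.univ.filter fun j => x j = true).card * V ∧
    volume (capBody δ v x ∆ capBody δ v y) =
      (Finset.univ.filter fun j => x j ≠ y j).card * V := by
  -- measurability of caps
  have hm : ∀ j, MeasurableSet (cap δ (v j)) := by
    intro j
    have h1 : MeasurableSet {z : EuclideanSpace ℝ (Fin d) | ‖z‖ ≤ 1} :=
      (isClosed_le continuous_norm continuous_const).measurableSet
    have h2 : MeasurableSet {z : EuclideanSpace ℝ (Fin d) | 1 - δ ^ 2 / 8 < ⟪z, v j⟫} :=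
      (isOpen_lt continuous_const (continuous_id.inner continuous_const)).measurableSet
    exact h1.inter h2
  -- each net point has norm 1
  have hsph : ∀ j, ‖v j‖ = 1 := fun j => by
    have := hnet.1 (mem_range_self j)
    simpa [mem_sphere_iff_norm] using this
  -- points of a cap are within δ/2 of its center
  have hclose : ∀ j z, z ∈ cap δ (v j) → dist z (v j) < δ / 2 := by
    intro j z hz
    have hsq : ‖z - v j‖ ^ 2 < (δ / 2) ^ 2 := by
      have := norm_sub_sq_real z (v j)
      rw [this, hsph j]
      have h1 : ‖z‖ ^ 2 ≤ 1 := by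
        have := hz.1
        nlinarith [norm_nonneg z]
      nlinarith [hz.2]
    have := lt_of_pow_lt_pow_left₀ 2 (by positivity : (0:ℝ) ≤ δ / 2) hsq
    simpa [dist_eq_norm] using this
  -- caps are pairwise disjoint, pointwise version
  have hdisjpt : ∀ i j : Fin n, i ≠ j → ∀ z, z ∈ cap δ (v i) → z ∉ cap δ (v j) := by
    intro i j hij z hzi hzj
    have hvd : δ ≤ dist (v i) (v j) :=
      hnet.2.1 _ (mem_range_self i) _ (mem_range_self j) (fun h => hij (hinj h))
    have : dist (v i) (v j) < δ := by
      calc dist (v i) (v j) ≤ dist (v i) z + dist z (v j) := dist_triangle _ _ _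
        _ < δ / 2 + δ / 2 := by
            rw [dist_comm (v i) z]
            exact add_lt_add (hclose i z hzi) (hclose j z hzj)
        _ = δ := by ring
    linarith
  have hdisj : ∀ i j : Fin n, i ≠ j → Disjoint (cap δ (v i)) (cap δ (v j)) :=
    fun i j hij => Set.disjoint_left.mpr (hdisjpt i j hij)
  -- base is disjoint from each cap, pointwise
  have hbd : ∀ (j) (z), z ∈ cap δ (v j) → z ∉ capBase δ v :=
    fun j z hz hmem => hmem.2 (mem_iUnion.mpr ⟨j, hz⟩)
  -- the key diff identity
  have hdiff : ∀ a b : Fin n → Bool,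
      capBody δ v a \ capBody δ v b
        = ⋃ j ∈ {j | a j = true ∧ b j = false}, cap δ (v j) := by
    intro a b
    ext z
    simp only [capBody, mem_diff, mem_union, mem_iUnion, exists_prop, mem_setOf_eq,
      not_or, not_exists, not_and]
    constructor
    · rintro ⟨hx, hnb, hnc⟩
      rcases hx with hbase | ⟨j, hja, hjz⟩
      · exact absurd hbase hnb
      · refine ⟨j, ⟨hja, ?_⟩, hjz⟩
        by_contra h
        have : b j = true := by simpa using h
        exact hnc j this hjz
    · rintro ⟨j, ⟨hja, hjb⟩, hjz⟩
      refine ⟨Or.inr ⟨j, hja, hjz⟩, hbd j z hjz, ?_⟩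
      intro k hk hkz
      have hkj : k ≠ j := by
        intro h; rw [h] at hk; rw [hjb] at hk; exact Bool.false_ne_true hk
      exact hdisjpt k j hkj z hkz hjz
  -- volume of a finite union of caps indexed by a finset
  have hvol : ∀ s : Finset (Fin n),
      volume (⋃ j ∈ s, cap δ (v j)) = s.card * V := by
    intro s
    rw [measure_biUnion_finset (fun i _ j _ hij => hdisj i j hij) (fun j _ => hm j)]
    simp [hV, Finset.sum_const, mul_comm]
  -- coercion lemma
  have hcoe : ∀ (p : Fin n → Prop) (_ : DecidablePred p),
      {j | p j} = ((Finset.univ.filter p : Finset (Fin n)) : Set (Fin n)) := by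
    intro p _; ext j; simp
  constructor
  · rw [capBody, hcoe (fun j => x j = true) _, Finset.set_biUnion_coe,
      measure_union
        (Set.disjoint_left.mpr fun z hz hz' => by
          obtain ⟨j, -, hj⟩ := mem_iUnion₂.mp hz'
          exact hbd j z hj hz)
        ((Finset.univ.filter fun j => x j = true).measurableSet_biUnion fun j _ => hm j),
      hvol]
  · have hidx : {j | x j = true ∧ y j = false} ∪ {j | y j = true ∧ x j = false}
        = {j | x j ≠ y j} := by
      ext j
      cases hx : x j <;> cases hy : y j <;> simp [hx, hy]
    have key : capBody δ v x ∆ capBody δ v y = ⋃ j ∈ {j | x j ≠ y j}, cap δ (v j) := by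
      rw [Set.symmDiff_def, hdiff x y, hdiff y x, ← Set.biUnion_union, hidx]
    rw [key, hcoe (fun j => x j ≠ y j) _, Finset.set_biUnion_coe, hvol]
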